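/- arXiv:2208.11922 — 4 statements merged into one kernel-verified Lean document; each statement's English description precedes it below -/
import Mathlib

section
/- The T axiom fails for the weak ontic necessity: there is a contextualized pointed model at which [W]p holds but p fails. (I.e., [W]p → p is not valid.) -/
universe u

/-- Maximal elements of `S` with respect to the priority relation `r`:
no element of `S` is strictly above them. -/
def maxOf {α : Type u} (r : α → α → Prop) (S : Set α) : Set α :=
  {x | x ∈ S ∧ ∀ y ∈ S, ¬ r y x}

/-- The rules remaining after `k` rounds of removing maximal elements. -/
def remSet {α : Type u} (r : α → α → Prop) (L : Set α) : ℕ → Set α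
  | 0 => L
  | k + 1 => remSet r L k \ maxOf r (remSet r L k)

/-- The `k`-th level of the hierarchy of rules: the maximal elements of what remains. -/
def levelSet {α : Type u} (r : α → α → Prop) (L : Set α) (k : ℕ) : Set α :=
  maxOf r (remSet r L k)

/-- A model for SWONBT: a serial discrete rooted tree with a valuation. -/
structure TreeModel (AP : Type) : Type 1 where
  W : Type
  R : W → W → Prop
  root : W
  serial : ∀ w, ∃ v, R w v
  rooted : ∀ w, ∃! l : List W,
    l.head? = some root ∧ l.getLast? = some w ∧ List.Chain' R l
  V : AP → Set W

/-- A timeline: an infinite `R`-increasing sequence starting at the root. -/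
def Timeline {AP : Type} (M : TreeModel AP) : Type :=
  {π : ℕ → M.W // π 0 = M.root ∧ ∀ i, M.R (π i) (π (i + 1))}

/-- A context for a model: a finite set of ontic rules (sets of timelines),
an irreflexive transitive priority order on them, and a set of undefeatable
rules among the maximal ones. -/
structure Context {AP : Type} (M : TreeModel AP) where
  rules : Set (Set (Timeline M))
  rules_fin : rules.Finite
  prio : Set (Timeline M) → Set (Timeline M) → Prop
  prio_irrefl : ∀ a ∈ rules, ¬ prio a a
  prio_trans : ∀ a ∈ rules, ∀ b ∈ rules, ∀ c ∈ rules, prio a b → prio b c → prio a c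
  und : Set (Set (Timeline M))
  und_sub : und ⊆ maxOf prio rules

/-- Timelines enabled by a set of rules: their intersection
(everything, if the set of rules is empty). -/
def En {AP : Type} {M : TreeModel AP} (S : Set (Set (Timeline M))) : Set (Timeline M) :=
  ⋂₀ S

/-- Accepted timelines: those enabled by the undefeatable rules. -/
def AccSet {AP : Type} {M : TreeModel AP} (C : Context M) : Set (Timeline M) :=
  En C.und

/-- The intersection `En(ℒ₀) ∩ … ∩ En(ℒ_k)` of the first `k+1` levels of the hierarchy. -/
def ISeg {AP : Type} {M : TreeModel AP} (C : Context M) (k : ℕ) : Set (Timeline M) :=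
  ⋂ j ∈ Finset.range (k + 1), En (levelSet C.prio C.rules j)

open Classical in
/-- Expected timelines: empty if `En(ℒ₀) = ∅`; otherwise the intersection of
`En(ℒ_j)` along the longest initial segment of the hierarchy with nonempty
intersection. -/
noncomputable def ExpSet {AP : Type} {M : TreeModel AP} (C : Context M) : Set (Timeline M) :=
  if En (levelSet C.prio C.rules 0) = ∅ then ∅
  else ⋂ j ∈ {j : ℕ | ISeg C j ≠ ∅}, En (levelSet C.prio C.rules j)

/-- Formulas of the logic SWONBT. -/
inductive Formula (AP : Type) : Type where
  | atom : AP → Formula AP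
  | bot : Formula AP
  | neg : Formula AP → Formula AP
  | and : Formula AP → Formula AP → Formula AP
  | next : Formula AP → Formula AP
  | yest : Formula AP → Formula AP
  | strg : Formula AP → Formula AP
  | weak : Formula AP → Formula AP

/-- Disjunction, defined classically. -/
def Formula.or {AP : Type} (φ ψ : Formula AP) : Formula AP :=
  .neg (.and (.neg φ) (.neg ψ))

/-- `⟨S⟩φ := ¬[S]¬φ`. -/
def Formula.diaS {AP : Type} (φ : Formula AP) : Formula AP :=
  .neg (.strg (.neg φ))

/-- `⟨W⟩φ := ¬[W]¬φ`. -/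
def Formula.diaW {AP : Type} (φ : Formula AP) : Formula AP :=
  .neg (.weak (.neg φ))

/-- Truth of formulas relative to a set `AT` of accepted timelines and a set
`ET` of expected timelines (the semantics of AE pointed models). -/
def Sat {AP : Type} (M : TreeModel AP) (AT ET : Set (Timeline M)) :
    Formula AP → Timeline M → ℕ → Prop
  | .atom p, π, i => π.1 i ∈ M.V p
  | .bot, _, _ => False
  | .neg φ, π, i => ¬ Sat M AT ET φ π i
  | .and φ ψ, π, i => Sat M AT ET φ π i ∧ Sat M AT ET ψ π i
  | .next φ, π, i => Sat M AT ET φ π (i + 1)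
  | .yest φ, π, i => 0 < i ∧ Sat M AT ET φ π (i - 1)
  | .strg φ, _, i => ∀ π' ∈ AT, Sat M AT ET φ π' i
  | .weak φ, _, i => ∀ π' ∈ ET, Sat M AT ET φ π' i

/-- Truth at a contextualized pointed model `(M, C, π, i)`. -/
def CSat {AP : Type} (M : TreeModel AP) (C : Context M) (φ : Formula AP)
    (π : Timeline M) (i : ℕ) : Prop :=
  Sat M (AccSet C) (ExpSet C) φ π i

/-- Closed formulas: `χ ::= [S]φ | [W]φ | ¬χ | (χ ∧ χ)`. -/
inductive Closed {AP : Type} : Formula AP → Prop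
  | strg (φ : Formula AP) : Closed (.strg φ)
  | weak (φ : Formula AP) : Closed (.weak φ)
  | neg {χ : Formula AP} : Closed χ → Closed (.neg χ)
  | and {χ₁ χ₂ : Formula AP} : Closed χ₁ → Closed χ₂ → Closed (.and χ₁ χ₂)

/-!
In the full binary tree take the single rule `{τ}`, where `τ` is the all-`true` ray, with no
priorities and no undefeatable rules. Then every timeline is accepted but only `τ` is expected,
so `[W]p` holds at index `1` on the all-`false` ray, while `p`, true exactly at the nodes reached
by a `true` step, fails there.
-/

namespace ListTree

variable {α : Type}

def edge (u v : List α) : Prop := ∃ a, v = a :: u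

lemma isChain_flip_edge_tails (w : List α) : w.tails.IsChain (flip edge) := by
  induction w with
  | nil => exact List.isChain_singleton _
  | cons a w ih =>
    rw [List.tails_cons]
    cases w <;> exact List.IsChain.cons_cons ⟨a, rfl⟩ ih

lemma eq_tails_of_isChain_flip_edge (w : List α) {l : List (List α)}
    (hl : l.IsChain (flip edge)) (hhead : l.head? = some w) (hlast : l.getLast? = some []) :
    l = w.tails := by
  induction w generalizing l with
  | nil =>
    obtain ⟨_ | ⟨x, l⟩, rfl⟩ : ∃ l', l = [] :: l' := by
      cases l <;> simp_all
    · rfl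
    · obtain ⟨a, ha⟩ := (List.isChain_cons_cons.1 hl).1
      exact (List.cons_ne_nil _ _ ha.symm).elim
  | cons a w ih =>
    obtain ⟨_ | ⟨x, l⟩, rfl⟩ : ∃ l', l = (a :: w) :: l' := by
      cases l <;> simp_all
    · simp at hlast
    · obtain ⟨⟨b, hb⟩, hchain⟩ := List.isChain_cons_cons.1 hl
      obtain rfl : x = w := (List.cons.inj hb).2.symm
      rw [List.tails_cons, ih hchain rfl (by simpa using hlast)]

lemma head?_tails (w : List α) : w.tails.head? = some w := by
  cases w <;> rfl

lemma getLast?_tails (w : List α) : w.tails.getLast? = some [] := by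
  induction w with
  | nil => rfl
  | cons a w ih => rw [List.tails_cons, List.getLast?_cons, ih]; rfl

lemma isChain_edge_iff {w : List α} {l : List (List α)} :
    (l.head? = some [] ∧ l.getLast? = some w ∧ l.IsChain edge) ↔ l = w.tails.reverse := by
  constructor
  · rintro ⟨hhead, hlast, hl⟩
    rw [← List.reverse_reverse l] at hhead hlast hl
    rw [List.head?_reverse] at hhead
    rw [List.getLast?_reverse] at hlast
    rw [← eq_tails_of_isChain_flip_edge w (List.isChain_reverse.1 hl) hlast hhead,
      List.reverse_reverse]
  · rintro rfl
    exact ⟨by rw [List.head?_reverse, getLast?_tails], by rw [List.getLast?_reverse, head?_tails],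
      List.isChain_reverse.2 (isChain_flip_edge_tails w)⟩

variable (α) in
def model [Inhabited α] {AP : Type} (V : AP → Set (List α)) : TreeModel AP where
  W := List α
  R := edge
  root := []
  serial w := ⟨default :: w, default, rfl⟩
  rooted w := ⟨w.tails.reverse, isChain_edge_iff.2 rfl, fun _ hl => isChain_edge_iff.1 hl⟩
  V := V

def ray [Inhabited α] {AP : Type} {V : AP → Set (List α)} (a : α) : Timeline (model α V) :=
  ⟨fun i => List.replicate i a, rfl, fun _ => ⟨a, rfl⟩⟩

end ListTree

lemma ExpSet_subset_En_levelSet_zero {AP : Type} {M : TreeModel AP} (C : Context M) :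
    ExpSet C ⊆ En (levelSet C.prio C.rules 0) := by
  unfold ExpSet
  split_ifs with h
  · exact Set.empty_subset _
  · have h0 : ISeg C 0 ≠ ∅ := by simpa [ISeg] using h
    exact Set.biInter_subset_of_mem (s := {j | ISeg C j ≠ ∅}) h0

lemma maxOf_of_forall_not {α : Type u} {r : α → α → Prop} (hr : ∀ x y, ¬ r x y) (S : Set α) :
    maxOf r S = S :=
  Set.sep_eq_self_iff_mem_true.2 fun _ _ y _ => hr y _

def Context.ofRule {AP : Type} {M : TreeModel AP} (s : Set (Timeline M)) : Context M where
  rules := {s}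
  rules_fin := Set.finite_singleton s
  prio _ _ := False
  prio_irrefl _ _ := id
  prio_trans _ _ _ _ _ _ h _ := h
  und := ∅
  und_sub := Set.empty_subset _

namespace Context.ofRule

variable {AP : Type} {M : TreeModel AP} (s : Set (Timeline M))

lemma AccSet_eq : AccSet (Context.ofRule s) = Set.univ :=
  Set.sInter_empty

lemma ExpSet_subset : ExpSet (Context.ofRule s) ⊆ s := by
  have h := ExpSet_subset_En_levelSet_zero (Context.ofRule s)
  change ExpSet _ ⊆ En (maxOf (fun _ _ => False) {s}) at h
  rwa [maxOf_of_forall_not (fun _ _ => id), En, Set.sInter_singleton] at h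

end Context.ofRule

/-- the T axiom fails for the weak ontic necessity: there is a
contextualized pointed model at which `[W]p` holds but `p` fails. -/
theorem weak_T_fails :
    ∃ (AP : Type) (M : TreeModel AP) (C : Context M) (p : AP)
      (π : Timeline M) (i : ℕ),
      π ∈ AccSet C ∧
      CSat M C (.weak (.atom p)) π i ∧
      ¬ CSat M C (.atom p) π i := by
  let M := ListTree.model Bool fun _ : Unit => {w | w.head? = some true}
  let expected : Timeline M := ListTree.ray true
  refine ⟨Unit, M, Context.ofRule {expected}, (), ListTree.ray false, 1, ?_, ?_, ?_⟩
  · exact Context.ofRule.AccSet_eq _ ▸ Set.mem_univ _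
  · intro π hπ
    rw [Set.eq_of_mem_singleton (Context.ofRule.ExpSet_subset _ hπ)]
    rfl
  · rintro ⟨⟩
end

section
/- Distribution over disjunction with closed formulas: [S](χ ∨ φ) ↔ (χ ∨ [S]φ) is valid whenever χ is a closed formula. -/
universe u

theorem Sat.or_iff {AP : Type} {M : TreeModel AP} {AT ET : Set (Timeline M)}
    {φ ψ : Formula AP} {π : Timeline M} {i : ℕ} :
    Sat M AT ET (φ.or ψ) π i ↔ Sat M AT ET φ π i ∨ Sat M AT ET ψ π i := by
  simp only [Formula.or, Sat, not_and_or, not_not]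

theorem Closed.sat_iff {AP : Type} {χ : Formula AP} (hχ : Closed χ) {M : TreeModel AP}
    {AT ET : Set (Timeline M)} (π π' : Timeline M) (i : ℕ) :
    Sat M AT ET χ π i ↔ Sat M AT ET χ π' i := by
  induction hχ with
  | strg | weak => rfl
  | neg _ ih => exact not_congr ih
  | and _ _ ih₁ ih₂ => exact and_congr ih₁ ih₂

theorem Closed.sat_strg_or_iff {AP : Type} {χ : Formula AP} (hχ : Closed χ) (φ : Formula AP)
    {M : TreeModel AP} {AT ET : Set (Timeline M)} (π : Timeline M) (i : ℕ) :
    Sat M AT ET (.strg (χ.or φ)) π i ↔ Sat M AT ET (χ.or (.strg φ)) π i := by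
  simp only [Sat.or_iff, Sat]
  constructor
  · intro h
    refine or_iff_not_imp_left.2 fun hχπ π' hπ' => (h π' hπ').resolve_left ?_
    rwa [hχ.sat_iff π' π]
  · rintro (hχπ | hφ) π' hπ'
    · exact .inl ((hχ.sat_iff π π' i).1 hχπ)
    · exact .inr (hφ π' hπ')

theorem valid_strg_closed_or_general {AP : Type} (χ φ : Formula AP) (hχ : Closed χ)
    (M : TreeModel AP) (C : Context M) (π : Timeline M) (i : ℕ) :
    CSat M C (.strg (χ.or φ)) π i ↔ CSat M C (χ.or (.strg φ)) π i :=
  hχ.sat_strg_or_iff φ π i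

/-- `[S](χ ∨ φ) ↔ (χ ∨ [S]φ)` is valid whenever `χ` is a
closed formula. -/
theorem valid_strg_closed_or {AP : Type} (χ φ : Formula AP) (hχ : Closed χ)
    (M : TreeModel AP) (C : Context M) (π : Timeline M) (i : ℕ)
    (hπ : π ∈ AccSet C) :
    CSat M C (.strg (χ.or φ)) π i ↔ CSat M C (χ.or (.strg φ)) π i :=
  valid_strg_closed_or_general χ φ hχ M C π i
end

section
/- Validity over contextualized models coincides with validity over AE pointed models: a formula φ of the language with X, Y, [S], [W] is true at all AE pointed models iff it is true at all contextualized pointed models. -/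
universe u

/-!
The pairs `(AccSet C, ExpSet C)` are exactly the pairs `(AT, ET)` with `ET ⊆ AT`: the expected
timelines always lie inside the enabled set of the top level of the hierarchy, which contains the
undefeatable rules; conversely, for `ET ⊆ AT` the context with the two rules `AT` and `ET`, no
priorities and `AT` undefeatable has a one-level hierarchy, so it accepts `AT` and expects
`AT ∩ ET = ET`. Truth at a pointed model depends only on the pair, so the two notions of
validity agree.
-/

section Hierarchy

variable {α : Type u}

@[simp]
lemma maxOf_bot (S : Set α) : maxOf (fun _ _ => False) S = S := by
  ext x
  simp [maxOf]

lemma remSet_bot_succ (L : Set α) (k : ℕ) : remSet (fun _ _ => False) L (k + 1) = ∅ := by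
  simp [remSet]

lemma levelSet_bot_zero (L : Set α) : levelSet (fun _ _ => False) L 0 = L := by
  simp [levelSet, remSet]

lemma levelSet_bot_succ (L : Set α) (k : ℕ) : levelSet (fun _ _ => False) L (k + 1) = ∅ := by
  simp [levelSet, remSet_bot_succ]

end Hierarchy

section Contexts

variable {AP : Type} {M : TreeModel AP}

lemma iInter_En_levelSet_bot {p : ℕ → Prop} (hp : p 0) (L : Set (Set (Timeline M))) :
    ⋂ (j) (_ : p j), En (levelSet (fun _ _ => False) L j) = En L := by
  apply subset_antisymm
  · exact (Set.iInter₂_subset (s := fun j _ => En (levelSet (fun _ _ => False) L j)) 0 hp).trans_eq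
      (congrArg En (levelSet_bot_zero L))
  · refine Set.subset_iInter₂ fun j _ => ?_
    cases j with
    | zero => rw [levelSet_bot_zero]
    | succ j => simp [levelSet_bot_succ, En]

lemma expSet_subset_En_levelSet_zero (C : Context M) :
    ExpSet C ⊆ En (levelSet C.prio C.rules 0) := by
  unfold ExpSet
  split_ifs with h
  · exact Set.empty_subset _
  · have hISeg : ISeg C 0 ≠ ∅ := by simpa [ISeg] using h
    exact Set.iInter₂_subset (s := fun j _ => En (levelSet C.prio C.rules j)) 0 hISeg

lemma expSet_subset_accSet (C : Context M) : ExpSet C ⊆ AccSet C :=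
  (expSet_subset_En_levelSet_zero C).trans (Set.sInter_subset_sInter C.und_sub)

lemma expSet_of_prio_bot (C : Context M) (h : C.prio = fun _ _ => False) :
    ExpSet C = En C.rules := by
  have hISeg (k : ℕ) : ISeg C k = En C.rules := by
    rw [ISeg, h]
    exact iInter_En_levelSet_bot (by simp) _
  unfold ExpSet
  rw [h, levelSet_bot_zero]
  split_ifs with hEn
  · exact hEn.symm
  · exact iInter_En_levelSet_bot (p := fun j => ISeg C j ≠ ∅) (by rwa [hISeg]) _

def Context.ofAccExp (AT ET : Set (Timeline M)) : Context M where
  rules := {AT, ET}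
  rules_fin := (Set.finite_singleton ET).insert AT
  prio := fun _ _ => False
  prio_irrefl := fun _ _ h => h
  prio_trans := fun _ _ _ _ _ _ h _ => h
  und := {AT}
  und_sub := by
    rw [maxOf_bot]
    exact Set.singleton_subset_iff.mpr (Set.mem_insert AT {ET})

lemma accSet_ofAccExp (AT ET : Set (Timeline M)) : AccSet (Context.ofAccExp AT ET) = AT :=
  Set.sInter_singleton AT

lemma expSet_ofAccExp {AT ET : Set (Timeline M)} (h : ET ⊆ AT) :
    ExpSet (Context.ofAccExp AT ET) = ET := by
  rw [expSet_of_prio_bot _ rfl]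
  simpa [En, Context.ofAccExp] using h

end Contexts

/-- validity over AE pointed models coincides with validity over
contextualized pointed models. -/
theorem AE_validity_iff_context_validity {AP : Type} (φ : Formula AP) :
    (∀ (M : TreeModel AP) (AT ET : Set (Timeline M)) (π : Timeline M) (i : ℕ),
        AT.Nonempty → ET ⊆ AT → π ∈ AT → Sat M AT ET φ π i) ↔
    (∀ (M : TreeModel AP) (C : Context M) (π : Timeline M) (i : ℕ),
        π ∈ AccSet C → CSat M C φ π i) := by
  constructor
  · intro hAE M C π i hπ
    exact hAE M _ _ π i ⟨π, hπ⟩ (expSet_subset_accSet C) hπ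
  · intro hC M AT ET π i _ hET hπ
    have hsat := hC M (Context.ofAccExp AT ET) π i (by rwa [accSet_ofAccExp])
    rwa [CSat, accSet_ofAccExp, expSet_ofAccExp hET] at hsat
end

section
/- Every pair (AT, ET) with AT a nonempty set of timelines of a model M and ET ⊆ AT arises from a context: there exists a context C = (ℒ, ≻, 𝕌) for M such that Acc(C) = AT and Exp(C) = ET. -/
universe u

section Hierarchy

variable {α : Type u}

lemma maxOf_subset (r : α → α → Prop) (S : Set α) : maxOf r S ⊆ S :=
  fun _ hx => hx.1

lemma remSet_antitone (r : α → α → Prop) (L : Set α) : Antitone (remSet r L) :=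
  antitone_nat_of_succ_le fun _ => Set.sdiff_subset

lemma levelSet_subset (r : α → α → Prop) (L : Set α) (k : ℕ) : levelSet r L k ⊆ L :=
  (maxOf_subset r _).trans (remSet_antitone r L (Nat.zero_le k))

end Hierarchy

section TwoTier

variable {α : Type u} {T B : Set α}

def twoTierPrio (T B : Set α) (a b : α) : Prop :=
  a ∈ T ∧ b ∈ B

lemma subset_maxOf_twoTierPrio (hTB : Disjoint T B) : T ⊆ maxOf (twoTierPrio T B) (T ∪ B) :=
  fun _ hx => ⟨Or.inl hx, fun _ _ hyx => hTB.notMem_of_mem_left hx hyx.2⟩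

lemma maxOf_twoTierPrio (hT : T.Nonempty) (hTB : Disjoint T B) :
    maxOf (twoTierPrio T B) (T ∪ B) = T := by
  refine Set.Subset.antisymm (fun x hx => ?_) (subset_maxOf_twoTierPrio hTB)
  obtain ⟨t, ht⟩ := hT
  exact hx.1.resolve_right fun hxB => hx.2 t (Or.inl ht) ⟨ht, hxB⟩

lemma maxOf_twoTierPrio_right (hTB : Disjoint T B) : maxOf (twoTierPrio T B) B = B :=
  Set.Subset.antisymm (maxOf_subset _ _)
    fun _ hx => ⟨hx, fun _ hy hyx => hTB.notMem_of_mem_left hyx.1 hy⟩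

lemma remSet_twoTierPrio_one (hT : T.Nonempty) (hTB : Disjoint T B) :
    remSet (twoTierPrio T B) (T ∪ B) 1 = B := by
  rw [remSet, remSet, maxOf_twoTierPrio hT hTB, Set.union_sdiff_left, hTB.sdiff_eq_right]

lemma levelSet_twoTierPrio_zero (hT : T.Nonempty) (hTB : Disjoint T B) :
    levelSet (twoTierPrio T B) (T ∪ B) 0 = T :=
  maxOf_twoTierPrio hT hTB

lemma levelSet_twoTierPrio_one (hT : T.Nonempty) (hTB : Disjoint T B) :
    levelSet (twoTierPrio T B) (T ∪ B) 1 = B := by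
  rw [levelSet, remSet_twoTierPrio_one hT hTB, maxOf_twoTierPrio_right hTB]

end TwoTier

section Contexts

variable {AP : Type} {M : TreeModel AP}

lemma En_subset_iInter_En_levelSet (r : Set (Timeline M) → Set (Timeline M) → Prop)
    (L : Set (Set (Timeline M))) : En L ⊆ ⋂ j, En (levelSet r L j) :=
  Set.subset_iInter fun j => Set.sInter_subset_sInter (levelSet_subset r L j)

lemma ExpSet_eq_iInter_of_nonempty (C : Context M)
    (h : (⋂ j, En (levelSet C.prio C.rules j)).Nonempty) :
    ExpSet C = ⋂ j, En (levelSet C.prio C.rules j) := by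
  obtain ⟨x, hx⟩ := h
  rw [Set.mem_iInter] at hx
  have hISeg : ∀ j, ISeg C j ≠ ∅ := fun j =>
    Set.nonempty_iff_ne_empty.mp ⟨x, Set.mem_iInter₂.mpr fun i _ => hx i⟩
  rw [ExpSet, if_neg (Set.nonempty_iff_ne_empty.mp ⟨x, hx 0⟩)]
  exact Set.iInter_congr fun j => iInf_pos (hISeg j)

lemma iInter_En_levelSet_twoTierPrio {T B : Set (Set (Timeline M))} (hT : T.Nonempty)
    (hTB : Disjoint T B) : ⋂ j, En (levelSet (twoTierPrio T B) (T ∪ B) j) = En (T ∪ B) := by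
  refine Set.Subset.antisymm (fun x hx => ?_) (En_subset_iInter_En_levelSet _ _)
  rw [Set.mem_iInter] at hx
  have h0 := hx 0
  have h1 := hx 1
  rw [levelSet_twoTierPrio_zero hT hTB] at h0
  rw [levelSet_twoTierPrio_one hT hTB] at h1
  rw [En, Set.sInter_union]
  exact ⟨h0, h1⟩

def Context.twoTier (T B : Set (Set (Timeline M))) (hfin : (T ∪ B).Finite) (hTB : Disjoint T B)
    (U : Set (Set (Timeline M))) (hU : U ⊆ T) : Context M where
  rules := T ∪ B
  rules_fin := hfin
  prio := twoTierPrio T B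
  prio_irrefl _ _ h := hTB.notMem_of_mem_left h.1 h.2
  prio_trans _ _ _ _ _ _ hab hbc := (hTB.notMem_of_mem_left hbc.1 hab.2).elim
  und := U
  und_sub := hU.trans (subset_maxOf_twoTierPrio hTB)

variable {T B U : Set (Set (Timeline M))} {hfin : (T ∪ B).Finite} {hTB : Disjoint T B}
  {hU : U ⊆ T}

lemma AccSet_twoTier : AccSet (Context.twoTier T B hfin hTB U hU) = En U := rfl

lemma ExpSet_twoTier_of_En_eq_empty (hT : T.Nonempty) (h : En T = ∅) :
    ExpSet (Context.twoTier T B hfin hTB U hU) = ∅ :=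
  if_pos ((congrArg En (levelSet_twoTierPrio_zero hT hTB)).trans h)

lemma ExpSet_twoTier_of_nonempty (hT : T.Nonempty) (h : (En (T ∪ B)).Nonempty) :
    ExpSet (Context.twoTier T B hfin hTB U hU) = En (T ∪ B) := by
  have hlevels := iInter_En_levelSet_twoTierPrio hT hTB
  exact (ExpSet_eq_iInter_of_nonempty _ (hlevels ▸ h)).trans hlevels

end Contexts

theorem every_pair_from_context_general {AP : Type} (M : TreeModel AP)
    (AT ET : Set (Timeline M)) (hsub : ET ⊆ AT) :
    ∃ C : Context M, AccSet C = AT ∧ ExpSet C = ET := by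
  rcases ET.eq_empty_or_nonempty with rfl | hET
  · -- the contradictory rule `∅` sits beside `AT` on the top level, so `En(ℒ₀) = ∅`
    refine ⟨Context.twoTier {AT, ∅} ∅ (Set.toFinite _) (Set.disjoint_empty _) {AT}
      (Set.singleton_subset_iff.mpr (Set.mem_insert _ _)), by simp [AccSet_twoTier, En], ?_⟩
    exact ExpSet_twoTier_of_En_eq_empty (Set.insert_nonempty _ _) (by simp [En])
  · -- removing `AT` from the lower tier keeps the tiers disjoint when `ET = AT`
    have hrules : ({AT} ∪ ({ET} \ {AT}) : Set (Set (Timeline M))) = {AT, ET} :=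
      Set.union_sdiff_self
    have hEn : En ({AT, ET} : Set (Set (Timeline M))) = ET := by
      simpa [En] using hsub
    refine ⟨Context.twoTier {AT} ({ET} \ {AT}) (Set.toFinite _) Set.disjoint_sdiff_right {AT}
      subset_rfl, by simp [AccSet_twoTier, En], ?_⟩
    rw [ExpSet_twoTier_of_nonempty (Set.singleton_nonempty _) (by rwa [hrules, hEn]), hrules, hEn]

/-- every pair `(AT, ET)` with `AT` nonempty and `ET ⊆ AT` arises
from some context: there is a context `C` with `Acc(C) = AT` and `Exp(C) = ET`. -/
theorem every_pair_from_context {AP : Type} (M : TreeModel AP)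
    (AT ET : Set (Timeline M)) (hAT : AT.Nonempty) (hsub : ET ⊆ AT) :
    ∃ C : Context M, AccSet C = AT ∧ ExpSet C = ET :=
  every_pair_from_context_general M AT ET hsub
end
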